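/- Let R_a > 0, R > 0, and let C ∈ (0,1] be a constant such that ‖v‖₂ ≤ C·‖∇v‖₂ for every C¹ function v on the closure of Ω vanishing on ∂Ω. Let ψ, θ be C² functions on the closure of Ω vanishing on ∂Ω that solve −Δψ − R_a·∂ₓθ = f₁ and J(ψ,θ) = Δθ + f₂ pointwise on Ω for continuous f₁, f₂, and satisfy |∂ₓψ| ≤ R/√2, |∂_yψ| ≤ R/√2, |∂ₓθ| ≤ R/√2, |∂_yθ| ≤ R/√2 on Ω. If L := min{1/2 − C·R/(2√2) − C·R_a/2, 1/2 − R_a/2 − 3·R·C/(2√2)} > 0, then ‖∇ψ‖₂² + ‖∇θ‖₂² ≤ (C²/(2L))·(‖f₁‖₂² + ‖f₂‖₂²). -/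

import Mathlib

open MeasureTheory Real Set Filter

noncomputable section

/-- The open unit square Ω = (0,1) × (0,1) in ℝ². -/
def Omg : Set (ℝ × ℝ) := Ioo (0:ℝ) 1 ×ˢ Ioo (0:ℝ) 1

/-- Partial derivative in the x-direction. -/
def px (f : ℝ × ℝ → ℝ) (p : ℝ × ℝ) : ℝ := fderiv ℝ f p (1, 0)

/-- Partial derivative in the y-direction. -/
def py (f : ℝ × ℝ → ℝ) (p : ℝ × ℝ) : ℝ := fderiv ℝ f p (0, 1)

/-- Laplacian. -/
def lap (f : ℝ × ℝ → ℝ) (p : ℝ × ℝ) : ℝ := px (px f) p + py (py f) p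

/-- Jacobian determinant J(ψ,θ) = ∂ₓψ·∂_yθ − ∂_yψ·∂ₓθ. -/
def Jac (ψ θ : ℝ × ℝ → ℝ) (p : ℝ × ℝ) : ℝ := px ψ p * py θ p - py ψ p * px θ p

/-- The L^q norm over Ω: ‖f‖_q = (∫_Ω |f|^q)^(1/q). -/
def Lnorm (f : ℝ × ℝ → ℝ) (q : ℝ) : ℝ := (∫ p in Omg, |f p| ^ q) ^ (1 / q)

/-- ‖∇f‖₂ = (∫_Ω (|∂ₓf|² + |∂_yf|²))^(1/2). -/
def gradNorm (f : ℝ × ℝ → ℝ) : ℝ :=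
  (∫ p in Omg, (|px f p| ^ 2 + |py f p| ^ 2)) ^ ((1:ℝ) / 2)

/-!
Test the first equation against `ψ` and the second against `θ`. Green's first identity, whose
boundary terms vanish with `ψ` and `θ`, turns them into
`‖∇ψ‖² = ∫ f₁ ψ + R_a ∫ (∂ₓθ) ψ` and `‖∇θ‖² = ∫ f₂ θ - ∫ J(ψ,θ) θ`.
Cauchy–Schwarz, the Poincaré inequality and the pointwise bound
`|J(ψ,θ)| ≤ R/√2 · (|∂ₓψ| + |∂ₓθ|)` bound the right-hand sides by products of the norms, and
Young's inequality absorbs the gradient terms into the left-hand sides, leaving at least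
`L (‖∇ψ‖² + ‖∇θ‖²)` on the left against `C²/2 · (‖f₁‖² + ‖f₂‖²)` on the right.
-/

open scoped Topology ENNReal

lemma ContinuousOn.memLp_restrict_of_eqOn {α : Type*} [TopologicalSpace α] [MeasurableSpace α]
    [OpensMeasurableSpace α] {μ : Measure α} [IsFiniteMeasureOnCompacts μ] {K U : Set α}
    {u v : α → ℝ} (hv : ContinuousOn v K) (hK : IsCompact K) (hU : MeasurableSet U)
    (hUK : U ⊆ K) (huv : EqOn u v U) (p : ℝ≥0∞) : MemLp u p (μ.restrict U) := by
  have : IsFiniteMeasure (μ.restrict U) :=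
    isFiniteMeasure_restrict.mpr ((measure_mono hUK).trans_lt hK.measure_lt_top).ne
  obtain ⟨M, hM⟩ := hK.exists_bound_of_continuousOn hv
  refine (MemLp.of_bound ((hv.mono hUK).aestronglyMeasurable hU) M ?_).ae_eq ?_
  · exact (ae_restrict_iff' hU).mpr (ae_of_all _ fun x hx => hM x (hUK hx))
  · exact (ae_restrict_iff' hU).mpr (ae_of_all _ fun x hx => (huv hx).symm)

lemma MeasureTheory.MemLp.integrable_fun_mul {α : Type*} [MeasurableSpace α] {μ : Measure α}
    {u v : α → ℝ} (hu : MemLp u 2 μ) (hv : MemLp v 2 μ) : Integrable (fun x => u x * v x) μ :=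
  hu.integrable_mul hv

-- On a closed set `s`, only the derivatives within `s` are continuous up to the boundary;
-- `px f` there is the derivative of an uncontrolled extension of `f`, or junk.
def pxWithin (s : Set (ℝ × ℝ)) (f : ℝ × ℝ → ℝ) (p : ℝ × ℝ) : ℝ := fderivWithin ℝ f s p (1, 0)

def pyWithin (s : Set (ℝ × ℝ)) (f : ℝ × ℝ → ℝ) (p : ℝ × ℝ) : ℝ := fderivWithin ℝ f s p (0, 1)

section PartialWithin

variable {s : Set (ℝ × ℝ)} {f : ℝ × ℝ → ℝ} {p : ℝ × ℝ}

lemma px_eq_pxWithin (hs : s ∈ 𝓝 p) : px f p = pxWithin s f p := by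
  rw [px, pxWithin, fderivWithin_of_mem_nhds hs]

lemma py_eq_pyWithin (hs : s ∈ 𝓝 p) : py f p = pyWithin s f p := by
  rw [py, pyWithin, fderivWithin_of_mem_nhds hs]

lemma px_eventuallyEq_pxWithin (hs : s ∈ 𝓝 p) : px f =ᶠ[𝓝 p] pxWithin s f :=
  (eventually_mem_nhds_iff.mpr hs).mono fun _ => px_eq_pxWithin

lemma py_eventuallyEq_pyWithin (hs : s ∈ 𝓝 p) : py f =ᶠ[𝓝 p] pyWithin s f :=
  (eventually_mem_nhds_iff.mpr hs).mono fun _ => py_eq_pyWithin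

lemma lap_eq_pxWithin_add_pyWithin (hs : s ∈ 𝓝 p) :
    lap f p = pxWithin s (pxWithin s f) p + pyWithin s (pyWithin s f) p := by
  rw [lap, px, py, (px_eventuallyEq_pxWithin hs).fderiv_eq,
    (py_eventuallyEq_pyWithin hs).fderiv_eq]
  exact congrArg₂ (· + ·) (px_eq_pxWithin hs) (py_eq_pyWithin hs)

lemma ContDiffOn.contDiffOn_pxWithin {m n : WithTop ℕ∞} (hf : ContDiffOn ℝ n f s)
    (hs : UniqueDiffOn ℝ s) (hmn : m + 1 ≤ n) : ContDiffOn ℝ m (pxWithin s f) s :=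
  (hf.fderivWithin hs hmn).clm_apply contDiffOn_const

lemma ContDiffOn.contDiffOn_pyWithin {m n : WithTop ℕ∞} (hf : ContDiffOn ℝ n f s)
    (hs : UniqueDiffOn ℝ s) (hmn : m + 1 ≤ n) : ContDiffOn ℝ m (pyWithin s f) s :=
  (hf.fderivWithin hs hmn).clm_apply contDiffOn_const

lemma ContDiffOn.hasFDerivAt_fderivWithin {n : WithTop ℕ∞} (hf : ContDiffOn ℝ n f s)
    (hn : n ≠ 0) (hs : s ∈ 𝓝 p) : HasFDerivAt f (fderivWithin ℝ f s p) p :=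
  ((hf.differentiableOn hn p (mem_of_mem_nhds hs)).hasFDerivWithinAt).hasFDerivAt hs

end PartialWithin

section Rectangle

variable {a b : ℝ × ℝ}

lemma closure_Ioo_prod_Ioo (h₁ : a.1 < b.1) (h₂ : a.2 < b.2) :
    closure (Ioo a.1 b.1 ×ˢ Ioo a.2 b.2) = Icc a b := by
  rw [closure_prod_eq, closure_Ioo h₁.ne, closure_Ioo h₂.ne, Icc_prod_eq]

lemma frontier_Ioo_prod_Ioo (h₁ : a.1 < b.1) (h₂ : a.2 < b.2) :
    frontier (Ioo a.1 b.1 ×ˢ Ioo a.2 b.2) = Icc a b \ Ioo a.1 b.1 ×ˢ Ioo a.2 b.2 := by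
  rw [frontier, closure_Ioo_prod_Ioo h₁ h₂, (isOpen_Ioo.prod isOpen_Ioo).interior_eq]

lemma uniqueDiffOn_Icc_prod (h₁ : a.1 < b.1) (h₂ : a.2 < b.2) : UniqueDiffOn ℝ (Icc a b) := by
  rw [Icc_prod_eq]
  exact (uniqueDiffOn_Icc h₁).prod (uniqueDiffOn_Icc h₂)

lemma Ioo_prod_Ioo_ae_eq_Icc : Ioo a.1 b.1 ×ˢ Ioo a.2 b.2 =ᵐ[volume] Icc a b := by
  rw [Icc_prod_eq, Measure.volume_eq_prod]
  exact Measure.set_prod_ae_eq Ioo_ae_eq_Icc Ioo_ae_eq_Icc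

lemma mk_mem_Icc_diff_Ioo_prod_Ioo {x y : ℝ} (hx : x ∈ Icc a.1 b.1) (hy : y ∈ Icc a.2 b.2)
    (h : x = a.1 ∨ x = b.1 ∨ y = a.2 ∨ y = b.2) :
    (x, y) ∈ Icc a b \ Ioo a.1 b.1 ×ˢ Ioo a.2 b.2 := by
  refine ⟨⟨⟨hx.1, hy.1⟩, ⟨hx.2, hy.2⟩⟩, fun ⟨hx', hy'⟩ => ?_⟩
  rcases h with rfl | rfl | rfl | rfl
  exacts [lt_irrefl _ hx'.1, lt_irrefl _ hx'.2, lt_irrefl _ hy'.1, lt_irrefl _ hy'.2]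

theorem integral_divergence_prod_Icc_eq_zero (hab : a ≤ b) {u v : ℝ × ℝ → ℝ}
    {u' v' : ℝ × ℝ → ℝ × ℝ →L[ℝ] ℝ} (hu : ContinuousOn u (Icc a b))
    (hv : ContinuousOn v (Icc a b))
    (hu' : ∀ p ∈ Ioo a.1 b.1 ×ˢ Ioo a.2 b.2, HasFDerivAt u (u' p) p)
    (hv' : ∀ p ∈ Ioo a.1 b.1 ×ˢ Ioo a.2 b.2, HasFDerivAt v (v' p) p)
    (hi : IntegrableOn (fun p => u' p (1, 0) + v' p (0, 1)) (Icc a b))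
    (hu0 : ∀ p ∈ Icc a b \ Ioo a.1 b.1 ×ˢ Ioo a.2 b.2, u p = 0)
    (hv0 : ∀ p ∈ Icc a b \ Ioo a.1 b.1 ×ˢ Ioo a.2 b.2, v p = 0) :
    ∫ p in Icc a b, (u' p (1, 0) + v' p (0, 1)) = 0 := by
  have hx : ∀ y ∈ ({a.2, b.2} : Set ℝ), ∫ x in a.1..b.1, v (x, y) = 0 := by
    rintro y hy
    rw [intervalIntegral.integral_congr (g := 0) fun x hx => hv0 (x, y) ?_]
    · exact intervalIntegral.integral_zero
    rw [uIcc_of_le hab.1] at hx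
    refine mk_mem_Icc_diff_Ioo_prod_Ioo hx ?_ (Or.inr (Or.inr hy))
    rcases hy with rfl | rfl
    exacts [left_mem_Icc.mpr hab.2, right_mem_Icc.mpr hab.2]
  have hy : ∀ x ∈ ({a.1, b.1} : Set ℝ), ∫ y in a.2..b.2, u (x, y) = 0 := by
    rintro x hx
    rw [intervalIntegral.integral_congr (g := 0) fun y hy => hu0 (x, y) ?_]
    · exact intervalIntegral.integral_zero
    rw [uIcc_of_le hab.2] at hy
    refine mk_mem_Icc_diff_Ioo_prod_Ioo ?_ hy (Or.imp_right Or.inl hx)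
    rcases hx with rfl | rfl
    exacts [left_mem_Icc.mpr hab.1, right_mem_Icc.mpr hab.1]
  rw [integral_divergence_prod_Icc_of_hasFDerivAt_of_le u v u' v' a b hab hu hv hu' hv' hi,
    hx a.2 (by simp), hx b.2 (by simp), hy a.1 (by simp), hy b.1 (by simp)]
  simp

theorem integral_mul_lap_eq_neg_integral_grad_mul_grad (h₁ : a.1 < b.1) (h₂ : a.2 < b.2)
    {f g : ℝ × ℝ → ℝ} (hf : ContDiffOn ℝ 2 f (Icc a b)) (hg : ContDiffOn ℝ 1 g (Icc a b))
    (hg0 : ∀ p ∈ frontier (Ioo a.1 b.1 ×ˢ Ioo a.2 b.2), g p = 0) :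
    ∫ p in Ioo a.1 b.1 ×ˢ Ioo a.2 b.2, g p * lap f p =
      -∫ p in Ioo a.1 b.1 ×ˢ Ioo a.2 b.2, (px g p * px f p + py g p * py f p) := by
  set U := Ioo a.1 b.1 ×ˢ Ioo a.2 b.2
  set s := Icc a b
  have hs : UniqueDiffOn ℝ s := uniqueDiffOn_Icc_prod h₁ h₂
  have hUs : U ⊆ s := subset_closure.trans (closure_Ioo_prod_Ioo h₁ h₂).subset
  have hU : IsOpen U := isOpen_Ioo.prod isOpen_Ioo
  have hsU : ∀ p ∈ U, s ∈ 𝓝 p := fun p hp => mem_of_superset (hU.mem_nhds hp) hUs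
  have hfx : ContDiffOn ℝ 1 (pxWithin s f) s := hf.contDiffOn_pxWithin hs (by norm_num)
  have hfy : ContDiffOn ℝ 1 (pyWithin s f) s := hf.contDiffOn_pyWithin hs (by norm_num)
  rw [frontier_Ioo_prod_Ioo h₁ h₂] at hg0
  -- the divergence theorem for the field `g ∇f`, which vanishes on the boundary
  set u' := fun p =>
    g p • fderivWithin ℝ (pxWithin s f) s p + pxWithin s f p • fderivWithin ℝ g s p
  set v' := fun p =>
    g p • fderivWithin ℝ (pyWithin s f) s p + pyWithin s f p • fderivWithin ℝ g s p
  have hDg := hg.continuousOn_fderivWithin hs le_rfl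
  have hdiv_cont : ContinuousOn (fun p => u' p (1, 0) + v' p (0, 1)) s :=
    (((hg.continuousOn.smul (hfx.continuousOn_fderivWithin hs le_rfl)).add
      (hfx.continuousOn.smul hDg)).clm_apply continuousOn_const).add
    (((hg.continuousOn.smul (hfy.continuousOn_fderivWithin hs le_rfl)).add
      (hfy.continuousOn.smul hDg)).clm_apply continuousOn_const)
  have hdiv := integral_divergence_prod_Icc_eq_zero (u := fun p => g p * pxWithin s f p)
    (v := fun p => g p * pyWithin s f p) (u' := u') (v' := v') ⟨h₁.le, h₂.le⟩
    (hg.continuousOn.mul hfx.continuousOn) (hg.continuousOn.mul hfy.continuousOn)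
    (fun p hp => (hg.hasFDerivAt_fderivWithin one_ne_zero (hsU p hp)).mul
      (hfx.hasFDerivAt_fderivWithin one_ne_zero (hsU p hp)))
    (fun p hp => (hg.hasFDerivAt_fderivWithin one_ne_zero (hsU p hp)).mul
      (hfy.hasFDerivAt_fderivWithin one_ne_zero (hsU p hp)))
    (hdiv_cont.integrableOn_compact isCompact_Icc)
    (fun p hp => by simp [hg0 p hp]) (fun p hp => by simp [hg0 p hp])
  have hpt : EqOn (fun p => u' p (1, 0) + v' p (0, 1))
      (fun p => g p * lap f p + (px g p * px f p + py g p * py f p)) U := by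
    intro p hp
    simp only [u', v', add_apply, smul_apply, smul_eq_mul]
    rw [lap_eq_pxWithin_add_pyWithin (hsU p hp), px_eq_pxWithin (hsU p hp),
      px_eq_pxWithin (hsU p hp), py_eq_pyWithin (hsU p hp), py_eq_pyWithin (hsU p hp)]
    simp only [pxWithin, pyWithin]
    ring
  have hint : ∀ {w w' : ℝ × ℝ → ℝ}, ContinuousOn w' s → EqOn w w' U → IntegrableOn w U :=
    fun hw' hww' => memLp_one_iff_integrable.mp
      (hw'.memLp_restrict_of_eqOn isCompact_Icc hU.measurableSet hUs hww' 1)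
  have hlap : IntegrableOn (fun p => g p * lap f p) U :=
    hint (hg.continuousOn.mul (((hfx.contDiffOn_pxWithin (m := 0) hs le_rfl).continuousOn).add
      (hfy.contDiffOn_pyWithin (m := 0) hs le_rfl).continuousOn))
      fun p hp => congrArg (g p * ·) (lap_eq_pxWithin_add_pyWithin (hsU p hp))
  have hgrad : IntegrableOn (fun p => px g p * px f p + py g p * py f p) U :=
    hint (((hg.contDiffOn_pxWithin (m := 0) hs le_rfl).continuousOn.mul hfx.continuousOn).add
      ((hg.contDiffOn_pyWithin (m := 0) hs le_rfl).continuousOn.mul hfy.continuousOn))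
      fun p hp => by
        rw [px_eq_pxWithin (hsU p hp), px_eq_pxWithin (hsU p hp),
          py_eq_pyWithin (hsU p hp), py_eq_pyWithin (hsU p hp)]
        rfl
  rw [← setIntegral_congr_set Ioo_prod_Ioo_ae_eq_Icc, setIntegral_congr_fun hU.measurableSet hpt,
    integral_add hlap hgrad] at hdiv
  exact eq_neg_of_add_eq_zero_left hdiv

end Rectangle

lemma isOpen_Omg : IsOpen Omg := isOpen_Ioo.prod isOpen_Ioo

lemma closure_Omg : closure Omg = Icc 0 1 :=
  closure_Ioo_prod_Ioo (a := 0) (b := 1) zero_lt_one zero_lt_one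

lemma uniqueDiffOn_closure_Omg : UniqueDiffOn ℝ (closure Omg) :=
  closure_Omg ▸ uniqueDiffOn_Icc_prod (a := 0) (b := 1) zero_lt_one zero_lt_one

lemma closure_Omg_mem_nhds {p : ℝ × ℝ} (hp : p ∈ Omg) : closure Omg ∈ 𝓝 p :=
  mem_of_superset (isOpen_Omg.mem_nhds hp) subset_closure

section Omg

variable {u v f g : ℝ × ℝ → ℝ}

lemma ContinuousOn.memLp_Omg_of_eqOn (hv : ContinuousOn v (closure Omg)) (huv : EqOn u v Omg)
    (q : ℝ≥0∞) : MemLp u q (volume.restrict Omg) :=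
  hv.memLp_restrict_of_eqOn (closure_Omg ▸ isCompact_Icc) isOpen_Omg.measurableSet
    subset_closure huv q

lemma ContinuousOn.memLp_Omg (hu : ContinuousOn u (closure Omg)) (q : ℝ≥0∞) :
    MemLp u q (volume.restrict Omg) :=
  hu.memLp_Omg_of_eqOn (eqOn_refl _ _) q

lemma ContDiffOn.memLp_px (hf : ContDiffOn ℝ 1 f (closure Omg)) (q : ℝ≥0∞) :
    MemLp (px f) q (volume.restrict Omg) :=
  (hf.contDiffOn_pxWithin (m := 0) uniqueDiffOn_closure_Omg le_rfl).continuousOn.memLp_Omg_of_eqOn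
    (fun _ hp => px_eq_pxWithin (closure_Omg_mem_nhds hp)) q

lemma ContDiffOn.memLp_py (hf : ContDiffOn ℝ 1 f (closure Omg)) (q : ℝ≥0∞) :
    MemLp (py f) q (volume.restrict Omg) :=
  (hf.contDiffOn_pyWithin (m := 0) uniqueDiffOn_closure_Omg le_rfl).continuousOn.memLp_Omg_of_eqOn
    (fun _ hp => py_eq_pyWithin (closure_Omg_mem_nhds hp)) q

lemma ContDiffOn.memLp_lap (hf : ContDiffOn ℝ 2 f (closure Omg)) (q : ℝ≥0∞) :
    MemLp (lap f) q (volume.restrict Omg) := by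
  have hs := uniqueDiffOn_closure_Omg
  have hx := (hf.contDiffOn_pxWithin (m := 1) hs (by norm_num)).contDiffOn_pxWithin (m := 0) hs
    le_rfl
  have hy := (hf.contDiffOn_pyWithin (m := 1) hs (by norm_num)).contDiffOn_pyWithin (m := 0) hs
    le_rfl
  exact (hx.continuousOn.add hy.continuousOn).memLp_Omg_of_eqOn
    (fun _ hp => lap_eq_pxWithin_add_pyWithin (closure_Omg_mem_nhds hp)) q

lemma ContDiffOn.memLp_jac (hf : ContDiffOn ℝ 1 f (closure Omg))
    (hg : ContDiffOn ℝ 1 g (closure Omg)) (q : ℝ≥0∞) : MemLp (Jac f g) q (volume.restrict Omg) :=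
  ((hg.memLp_py q).mul (hf.memLp_px ∞)).sub ((hg.memLp_px q).mul (hf.memLp_py ∞))

lemma Lnorm_nonneg (f : ℝ × ℝ → ℝ) (q : ℝ) : 0 ≤ Lnorm f q :=
  Real.rpow_nonneg (setIntegral_nonneg isOpen_Omg.measurableSet fun _ _ => by positivity) _

lemma Lnorm_two_eq_sqrt (f : ℝ × ℝ → ℝ) : Lnorm f 2 = √(∫ p in Omg, f p ^ 2) := by
  simp only [Lnorm, Real.rpow_two, sq_abs, Real.sqrt_eq_rpow]

lemma gradNorm_eq_sqrt (f : ℝ × ℝ → ℝ) :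
    gradNorm f = √(∫ p in Omg, (px f p ^ 2 + py f p ^ 2)) := by
  simp only [gradNorm, sq_abs, Real.sqrt_eq_rpow]

lemma gradNorm_nonneg (f : ℝ × ℝ → ℝ) : 0 ≤ gradNorm f :=
  gradNorm_eq_sqrt f ▸ Real.sqrt_nonneg _

lemma gradNorm_sq (f : ℝ × ℝ → ℝ) :
    gradNorm f ^ 2 = ∫ p in Omg, (px f p ^ 2 + py f p ^ 2) := by
  rw [gradNorm_eq_sqrt,
    Real.sq_sqrt (setIntegral_nonneg isOpen_Omg.measurableSet fun _ _ => by positivity)]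

lemma ContDiffOn.Lnorm_px_le_gradNorm (hf : ContDiffOn ℝ 1 f (closure Omg)) :
    Lnorm (px f) 2 ≤ gradNorm f := by
  rw [Lnorm_two_eq_sqrt, gradNorm_eq_sqrt]
  refine Real.sqrt_le_sqrt (integral_mono (hf.memLp_px 2).integrable_sq
    ((hf.memLp_px 2).integrable_sq.add (hf.memLp_py 2).integrable_sq) fun p => ?_)
  exact le_add_of_nonneg_right (sq_nonneg _)

lemma integral_norm_mul_norm_le_Lnorm_mul_Lnorm (hu : MemLp u 2 (volume.restrict Omg))
    (hv : MemLp v 2 (volume.restrict Omg)) :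
    ∫ p in Omg, ‖u p‖ * ‖v p‖ ≤ Lnorm u 2 * Lnorm v 2 := by
  have h := integral_mul_norm_le_Lp_mul_Lq (p := 2) (q := 2) Real.HolderConjugate.two_two
    (by simpa using hu) (by simpa using hv)
  simpa only [Lnorm, Real.norm_eq_abs] using h

lemma integral_mul_le_Lnorm_mul_Lnorm (hu : MemLp u 2 (volume.restrict Omg))
    (hv : MemLp v 2 (volume.restrict Omg)) :
    ∫ p in Omg, u p * v p ≤ Lnorm u 2 * Lnorm v 2 := by
  refine (integral_mono (hu.integrable_mul hv) (hu.norm.integrable_mul hv.norm) fun p => ?_).trans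
    (integral_norm_mul_norm_le_Lnorm_mul_Lnorm hu hv)
  exact (le_abs_self _).trans_eq (abs_mul _ _)

lemma integral_mul_lap_self (hf : ContDiffOn ℝ 2 f (closure Omg))
    (hf0 : ∀ p ∈ frontier Omg, f p = 0) : ∫ p in Omg, f p * lap f p = -gradNorm f ^ 2 := by
  rw [closure_Omg] at hf
  have h : ∫ p in Omg, f p * lap f p = -∫ p in Omg, (px f p * px f p + py f p * py f p) :=
    integral_mul_lap_eq_neg_integral_grad_mul_grad (a := 0) (b := 1) zero_lt_one zero_lt_one hf
      (hf.of_le (by norm_num)) hf0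
  rw [h, gradNorm_sq]
  simp only [sq]

end Omg

lemma abs_jac_le {ψ θ : ℝ × ℝ → ℝ} {p : ℝ × ℝ} {r : ℝ} (hψ : |py ψ p| ≤ r)
    (hθ : |py θ p| ≤ r) : |Jac ψ θ p| ≤ r * (|px ψ p| + |px θ p|) :=
  calc |Jac ψ θ p| ≤ |px ψ p| * |py θ p| + |py ψ p| * |px θ p| := by
        rw [Jac, ← abs_mul, ← abs_mul]; exact abs_sub _ _
    _ ≤ |px ψ p| * r + r * |px θ p| := by gcongr
    _ = r * (|px ψ p| + |px θ p|) := by ring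

section Energy

variable {ψ θ f : ℝ × ℝ → ℝ} {C : ℝ}

lemma gradNorm_sq_le_of_neg_lap_sub_eq {Ra : ℝ} (hRa : 0 ≤ Ra)
    (hψ : ContDiffOn ℝ 2 ψ (closure Omg)) (hψ0 : ∀ p ∈ frontier Omg, ψ p = 0)
    (hθ : ContDiffOn ℝ 1 θ (closure Omg)) (hf : ContinuousOn f (closure Omg))
    (heq : ∀ p ∈ Omg, -lap ψ p - Ra * px θ p = f p) (hP : Lnorm ψ 2 ≤ C * gradNorm ψ) :
    gradNorm ψ ^ 2 ≤ Lnorm f 2 * (C * gradNorm ψ) + Ra * (gradNorm θ * (C * gradNorm ψ)) := by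
  have hψL := hψ.continuousOn.memLp_Omg 2
  have hθxL := hθ.memLp_px 2
  have hid : ∫ p in Omg, f p * ψ p = gradNorm ψ ^ 2 - Ra * ∫ p in Omg, px θ p * ψ p :=
    calc ∫ p in Omg, f p * ψ p = ∫ p in Omg, (-(ψ p * lap ψ p) - Ra * (px θ p * ψ p)) :=
          setIntegral_congr_fun isOpen_Omg.measurableSet fun p hp => by
            rw [← heq p hp]; ring
      _ = -(∫ p in Omg, ψ p * lap ψ p) - Ra * ∫ p in Omg, px θ p * ψ p := by
          rw [integral_sub (f := fun p => -(ψ p * lap ψ p)) (g := fun p => Ra * (px θ p * ψ p))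
            (hψL.integrable_mul (hψ.memLp_lap 2)).neg ((hθxL.integrable_mul hψL).const_mul Ra),
            integral_neg, integral_const_mul]
      _ = _ := by rw [integral_mul_lap_self hψ hψ0, neg_neg]
  calc gradNorm ψ ^ 2 = (∫ p in Omg, f p * ψ p) + Ra * ∫ p in Omg, px θ p * ψ p := by
        rw [hid]; ring
    _ ≤ Lnorm f 2 * Lnorm ψ 2 + Ra * (Lnorm (px θ) 2 * Lnorm ψ 2) := by
        gcongr
        exacts [integral_mul_le_Lnorm_mul_Lnorm (hf.memLp_Omg 2) hψL,
          integral_mul_le_Lnorm_mul_Lnorm hθxL hψL]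
    _ ≤ Lnorm f 2 * (C * gradNorm ψ) + Ra * (gradNorm θ * (C * gradNorm ψ)) := by
        have := Lnorm_nonneg f 2
        have := Lnorm_nonneg ψ 2
        have := gradNorm_nonneg θ
        gcongr
        exact hθ.Lnorm_px_le_gradNorm

lemma neg_integral_jac_mul_le {r : ℝ} (hr : 0 ≤ r) (hψ : ContDiffOn ℝ 1 ψ (closure Omg))
    (hθ : ContDiffOn ℝ 1 θ (closure Omg)) (hbd : ∀ p ∈ Omg, |py ψ p| ≤ r ∧ |py θ p| ≤ r) :
    -∫ p in Omg, Jac ψ θ p * θ p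
      ≤ r * (Lnorm (px ψ) 2 * Lnorm θ 2 + Lnorm (px θ) 2 * Lnorm θ 2) := by
  have hθL := hθ.continuousOn.memLp_Omg 2
  have hψθ := (hψ.memLp_px 2).norm.integrable_fun_mul hθL.norm
  have hθθ := (hθ.memLp_px 2).norm.integrable_fun_mul hθL.norm
  calc -∫ p in Omg, Jac ψ θ p * θ p
      ≤ ∫ p in Omg, r * (‖px ψ p‖ * ‖θ p‖ + ‖px θ p‖ * ‖θ p‖) := by
        rw [← integral_neg]
        refine setIntegral_mono_on ((hψ.memLp_jac hθ 2).integrable_fun_mul hθL).neg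
          ((hψθ.add hθθ).const_mul r) isOpen_Omg.measurableSet fun p hp => ?_
        simp only [Real.norm_eq_abs, ← add_mul, ← mul_assoc]
        calc -(Jac ψ θ p * θ p) ≤ |Jac ψ θ p| * |θ p| := (neg_le_abs _).trans_eq (abs_mul _ _)
          _ ≤ r * (|px ψ p| + |px θ p|) * |θ p| := by
              gcongr; exact abs_jac_le (hbd p hp).1 (hbd p hp).2
    _ = r * ((∫ p in Omg, ‖px ψ p‖ * ‖θ p‖) + ∫ p in Omg, ‖px θ p‖ * ‖θ p‖) := by
        rw [integral_const_mul, integral_add hψθ hθθ]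
    _ ≤ r * (Lnorm (px ψ) 2 * Lnorm θ 2 + Lnorm (px θ) 2 * Lnorm θ 2) := by
        gcongr
        exacts [integral_norm_mul_norm_le_Lnorm_mul_Lnorm (hψ.memLp_px 2) hθL,
          integral_norm_mul_norm_le_Lnorm_mul_Lnorm (hθ.memLp_px 2) hθL]

lemma gradNorm_sq_le_of_jac_eq {r : ℝ} (hr : 0 ≤ r)
    (hψ : ContDiffOn ℝ 1 ψ (closure Omg)) (hθ : ContDiffOn ℝ 2 θ (closure Omg))
    (hθ0 : ∀ p ∈ frontier Omg, θ p = 0) (hf : ContinuousOn f (closure Omg))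
    (heq : ∀ p ∈ Omg, Jac ψ θ p = lap θ p + f p)
    (hbd : ∀ p ∈ Omg, |py ψ p| ≤ r ∧ |py θ p| ≤ r) (hP : Lnorm θ 2 ≤ C * gradNorm θ) :
    gradNorm θ ^ 2 ≤ Lnorm f 2 * (C * gradNorm θ)
      + r * (gradNorm ψ * (C * gradNorm θ) + gradNorm θ * (C * gradNorm θ)) := by
  have hθ₁ : ContDiffOn ℝ 1 θ (closure Omg) := hθ.of_le (by norm_num)
  have hθL := hθ.continuousOn.memLp_Omg 2
  have hid : ∫ p in Omg, f p * θ p = (∫ p in Omg, Jac ψ θ p * θ p) + gradNorm θ ^ 2 :=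
    calc ∫ p in Omg, f p * θ p = ∫ p in Omg, (Jac ψ θ p * θ p - θ p * lap θ p) :=
          setIntegral_congr_fun isOpen_Omg.measurableSet fun p hp => by
            rw [heq p hp]; ring
      _ = _ := by
          rw [integral_sub ((hψ.memLp_jac hθ₁ 2).integrable_fun_mul hθL)
            (hθL.integrable_fun_mul (hθ.memLp_lap 2)), integral_mul_lap_self hθ hθ0,
            sub_neg_eq_add]
  calc gradNorm θ ^ 2 = (∫ p in Omg, f p * θ p) + -∫ p in Omg, Jac ψ θ p * θ p := by
        rw [hid]; ring
    _ ≤ Lnorm f 2 * Lnorm θ 2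
          + r * (Lnorm (px ψ) 2 * Lnorm θ 2 + Lnorm (px θ) 2 * Lnorm θ 2) :=
        add_le_add (integral_mul_le_Lnorm_mul_Lnorm (hf.memLp_Omg 2) hθL)
          (neg_integral_jac_mul_le hr hψ hθ₁ hbd)
    _ ≤ Lnorm f 2 * (C * gradNorm θ)
          + r * (gradNorm ψ * (C * gradNorm θ) + gradNorm θ * (C * gradNorm θ)) := by
        have := Lnorm_nonneg f 2
        have := Lnorm_nonneg θ 2
        have := gradNorm_nonneg ψ
        have := gradNorm_nonneg θ
        gcongr
        exacts [hψ.Lnorm_px_le_gradNorm, hθ₁.Lnorm_px_le_gradNorm]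

end Energy

lemma sq_add_sq_le_of_coupled_bounds {x y F₁ F₂ C Ra r L : ℝ} (hC0 : 0 ≤ C) (hC1 : C ≤ 1)
    (hRa : 0 ≤ Ra) (hr : 0 ≤ r) (hL : 0 < L)
    (h₁ : x ^ 2 ≤ F₁ * (C * x) + Ra * (y * (C * x)))
    (h₂ : y ^ 2 ≤ F₂ * (C * y) + r * (x * (C * y) + y * (C * y)))
    (hLx : L ≤ 1 / 2 - C * r / 2 - C * Ra / 2) (hLy : L ≤ 1 / 2 - Ra / 2 - 3 * r * C / 2) :
    x ^ 2 + y ^ 2 ≤ C ^ 2 / (2 * L) * (F₁ ^ 2 + F₂ ^ 2) := by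
  rw [div_mul_eq_mul_div, le_div_iff₀ (by positivity)]
  -- Young's inequality on each product, `Ra C ≤ Ra` on the `y²` coefficient
  linarith [mul_le_mul_of_nonneg_left hLx (sq_nonneg x),
    mul_le_mul_of_nonneg_left hLy (sq_nonneg y), sq_nonneg (C * F₁ - x), sq_nonneg (C * F₂ - y),
    mul_nonneg (mul_nonneg hRa hC0) (sq_nonneg (x - y)),
    mul_nonneg (mul_nonneg hr hC0) (sq_nonneg (x - y)),
    mul_nonneg (mul_nonneg hRa (sub_nonneg.mpr hC1)) (sq_nonneg y)]

/-- Stability estimate: the solution depends continuously on the source terms. -/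
theorem stmt_10 (Ra R C : ℝ) (hRa : 0 < Ra) (hR : 0 < R) (hC0 : 0 < C) (hC1 : C ≤ 1)
    (hPoincare : ∀ v : ℝ × ℝ → ℝ, ContDiffOn ℝ 1 v (closure Omg) →
      (∀ p ∈ frontier Omg, v p = 0) → Lnorm v 2 ≤ C * gradNorm v)
    (ψ θ f₁ f₂ : ℝ × ℝ → ℝ)
    (hψ : ContDiffOn ℝ 2 ψ (closure Omg)) (hθ : ContDiffOn ℝ 2 θ (closure Omg))
    (hψb : ∀ p ∈ frontier Omg, ψ p = 0) (hθb : ∀ p ∈ frontier Omg, θ p = 0)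
    (hf₁ : ContinuousOn f₁ (closure Omg)) (hf₂ : ContinuousOn f₂ (closure Omg))
    (heq1 : ∀ p ∈ Omg, -(lap ψ p) - Ra * px θ p = f₁ p)
    (heq2 : ∀ p ∈ Omg, Jac ψ θ p = lap θ p + f₂ p)
    (hbd : ∀ p ∈ Omg, |px ψ p| ≤ R / Real.sqrt 2 ∧ |py ψ p| ≤ R / Real.sqrt 2 ∧
      |px θ p| ≤ R / Real.sqrt 2 ∧ |py θ p| ≤ R / Real.sqrt 2)
    (L : ℝ)
    (hLdef : L = min (1 / 2 - C * R / (2 * Real.sqrt 2) - C * Ra / 2)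
      (1 / 2 - Ra / 2 - 3 * R * C / (2 * Real.sqrt 2)))
    (hL : 0 < L) :
    gradNorm ψ ^ 2 + gradNorm θ ^ 2
      ≤ (C ^ 2 / (2 * L)) * (Lnorm f₁ 2 ^ 2 + Lnorm f₂ 2 ^ 2) := by
  have hr : 0 < R / √2 := by positivity
  have hψ₁ : ContDiffOn ℝ 1 ψ (closure Omg) := hψ.of_le (by norm_num)
  have hθ₁ : ContDiffOn ℝ 1 θ (closure Omg) := hθ.of_le (by norm_num)
  have hEψ := gradNorm_sq_le_of_neg_lap_sub_eq hRa.le hψ hψb hθ₁ hf₁ heq1 (hPoincare ψ hψ₁ hψb)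
  have hEθ := gradNorm_sq_le_of_jac_eq hr.le hψ₁ hθ hθb hf₂ heq2
    (fun p hp => ⟨(hbd p hp).2.1, (hbd p hp).2.2.2⟩) (hPoincare θ hθ₁ hθb)
  refine sq_add_sq_le_of_coupled_bounds hC0.le hC1 hRa.le hr.le hL hEψ hEθ ?_ ?_
  · exact hLdef ▸ (min_le_left _ _).trans_eq (by ring)
  · exact hLdef ▸ (min_le_right _ _).trans_eq (by ring)
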